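/- The map σ restricts to a bijection of 𝓛 onto 𝓛 (that is, 𝓛 is σ-invariant) if and only if B(qt+p) = q⁻¹·C∘B(t)∘C⁻¹ for every t ∈ I. -/

import Mathlib

noncomputable section

variable {V : Type*} [NormedAddCommGroup V] [NormedSpace ℝ V]

/-- The space `𝓔` of (twice continuously differentiable) solutions of
`u''(t) = f(t)·u(t) + A(u(t))` on `I`, extended by zero off `I`. -/
def solSpace (I : Set ℝ) (f : ℝ → ℝ) (A : V →L[ℝ] V) : Submodule ℝ (ℝ → V) where
  carrier := {u | (∀ t ∉ I, u t = 0) ∧ ∃ u' : ℝ → V,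
      (∀ t ∈ I, HasDerivAt u (u' t) t) ∧
      (∀ t ∈ I, HasDerivAt u' (f t • u t + A (u t)) t)}
  zero_mem' := by
    refine ⟨fun t _ => rfl, 0, fun t ht => ?_, fun t ht => ?_⟩
    · simpa using hasDerivAt_const t (0 : V)
    · simpa using hasDerivAt_const t (0 : V)
  add_mem' := by
    rintro u v ⟨hu0, u', hu1, hu2⟩ ⟨hv0, v', hv1, hv2⟩
    refine ⟨fun t ht => by simp [hu0 t ht, hv0 t ht], u' + v', fun t ht => ?_, fun t ht => ?_⟩
    · simpa using (hu1 t ht).add (hv1 t ht)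
    · have h := (hu2 t ht).add (hv2 t ht)
      have he : f t • (u + v) t + A ((u + v) t)
          = f t • u t + A (u t) + (f t • v t + A (v t)) := by
        simp [smul_add]
        abel
      rw [he]
      simpa using h
  smul_mem' := by
    rintro c u ⟨hu0, u', hu1, hu2⟩
    refine ⟨fun t ht => by simp [hu0 t ht], c • u', fun t ht => ?_, fun t ht => ?_⟩
    · simpa using (hu1 t ht).const_smul c
    · have h := (hu2 t ht).const_smul c
      have he : f t • (c • u) t + A ((c • u) t) = c • (f t • u t + A (u t)) := by
        simp [smul_add, smul_smul, mul_comm]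
      rw [he]
      simpa using h

/-- The space `𝓛` of (continuously differentiable) solutions of `u'(t) = B(t)(u(t))` on `I`,
extended by zero off `I`. -/
def firstOrderSol (I : Set ℝ) (B : ℝ → V →L[ℝ] V) : Submodule ℝ (ℝ → V) where
  carrier := {u | (∀ t ∉ I, u t = 0) ∧ ∀ t ∈ I, HasDerivAt u (B t (u t)) t}
  zero_mem' := by
    refine ⟨fun t _ => rfl, fun t ht => ?_⟩
    simpa using hasDerivAt_const t (0 : V)
  add_mem' := by
    rintro u v ⟨hu0, hu1⟩ ⟨hv0, hv1⟩
    refine ⟨fun t ht => by simp [hu0 t ht, hv0 t ht], fun t ht => ?_⟩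
    have h := (hu1 t ht).add (hv1 t ht)
    have he : B t ((u + v) t) = B t (u t) + B t (v t) := by simp
    rw [he]
    simpa using h
  smul_mem' := by
    rintro c u ⟨hu0, hu1⟩
    refine ⟨fun t ht => by simp [hu0 t ht], fun t ht => ?_⟩
    have h := (hu1 t ht).const_smul c
    have he : B t ((c • u) t) = c • B t (u t) := by simp
    rw [he]
    simpa using h

/-- The action `(σu)(t) = C (u (q⁻¹(t − p)))` of a triple `σ = (q,p,C)`. -/
def sigmaAct (q p : ℝ) (C : V →L[ℝ] V) (u : ℝ → V) : ℝ → V :=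
  fun t => C (u (q⁻¹ * (t - p)))

section ODEAux
open Set
variable {V : Type*} [NormedAddCommGroup V] [NormedSpace ℝ V] [CompleteSpace V]


lemma hasDerivWithinAt_singleton' (f : ℝ → V) (x : ℝ) (d : V) :
    HasDerivWithinAt f d {x} x := by
  simp only [HasDerivWithinAt, HasDerivAtFilter, nhdsWithin_singleton,
    hasFDerivAtFilter_iff_isLittleO, Asymptotics.isLittleO_pure]
  simp

/-- One Picard–Lindelöf step for a linear ODE: uniform step length `1/(2(M+1))`. -/
lemma linODE_step {B : ℝ → V →L[ℝ] V} {a b M : ℝ}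
    (hcont : ContinuousOn B (Icc a b)) (hM : ∀ t ∈ Icc a b, ‖B t‖ ≤ M)
    {s d : ℝ} (hs : s ∈ Icc a b) (hd : d ∈ Icc a b) (hsd : s ≤ d)
    (hlen : d - s ≤ (2 * (M + 1))⁻¹) (x : V) :
    ∃ u : ℝ → V, u s = x ∧ ∀ t ∈ Icc s d, HasDerivWithinAt u (B t (u t)) (Icc s d) t := by
  have hM0 : 0 ≤ M := le_trans (norm_nonneg _) (hM s hs)
  have hsub : Icc s d ⊆ Icc a b := Icc_subset_Icc hs.1 hd.2
  have hpl : IsPicardLindelof (fun t y => B t y) (tmin := s) (tmax := d) ⟨s, ⟨le_rfl, hsd⟩⟩ x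
      (‖x‖₊ + 1) 0 ((M + 1) * (2 * ‖x‖ + 1)).toNNReal (M + 1).toNNReal := by
    constructor
    · intro t ht
      refine LipschitzWith.lipschitzOnWith ?_
      refine LipschitzWith.weaken (B t).lipschitz ?_
      rw [← norm_toNNReal]
      exact Real.toNNReal_mono (le_trans (hM t (hsub ht)) (by linarith))
    · intro y _
      exact (hcont.mono hsub).clm_apply continuousOn_const
    · intro t ht y hy
      have h1 : ‖y‖ ≤ 2 * ‖x‖ + 1 := by
        have hd := mem_closedBall_iff_norm.mp hy
        simp only [NNReal.coe_add, coe_nnnorm, NNReal.coe_one] at hd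
        have h2 := norm_sub_norm_le y x
        linarith
      refine le_trans ?_ (Real.le_coe_toNNReal _)
      calc ‖B t y‖ ≤ ‖B t‖ * ‖y‖ := (B t).le_opNorm y
        _ ≤ M * (2 * ‖x‖ + 1) := by
            apply mul_le_mul (hM t (hsub ht)) h1 (norm_nonneg _) hM0
        _ ≤ (M + 1) * (2 * ‖x‖ + 1) := by nlinarith [norm_nonneg x]
    · have : max (d - s) (s - s) = d - s := by
        rw [sub_self]; exact max_eq_left (by linarith)
      simp only [NNReal.coe_add, coe_nnnorm, NNReal.coe_one, NNReal.coe_zero, sub_zero]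
      rw [Real.coe_toNNReal _ (by positivity)]
      rw [this]
      have h2M : (0:ℝ) < 2 * (M + 1) := by linarith
      calc (M + 1) * (2 * ‖x‖ + 1) * (d - s) ≤ (M + 1) * (2 * ‖x‖ + 1) * (2 * (M + 1))⁻¹ := by
            apply mul_le_mul_of_nonneg_left hlen (by positivity)
        _ = (2 * ‖x‖ + 1) / 2 := by field_simp
        _ ≤ ‖x‖ + 1 := by linarith [norm_nonneg x]
  obtain ⟨u, hu0, hu⟩ := hpl.exists_eq_forall_mem_Icc_hasDerivWithinAt₀
  exact ⟨u, hu0, hu⟩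

/-- Gluing two solutions at a common point. -/
lemma glue_sol {B : ℝ → V →L[ℝ] V} {a m b : ℝ} (ham : a ≤ m) (hmb : m ≤ b)
    {u₁ u₂ : ℝ → V}
    (h1 : ∀ t ∈ Icc a m, HasDerivWithinAt u₁ (B t (u₁ t)) (Icc a m) t)
    (h2 : ∀ t ∈ Icc m b, HasDerivWithinAt u₂ (B t (u₂ t)) (Icc m b) t)
    (hm : u₁ m = u₂ m) :
    ∃ u : ℝ → V, (∀ t ≤ m, u t = u₁ t) ∧ (∀ t, m < t → u t = u₂ t) ∧
      ∀ t ∈ Icc a b, HasDerivWithinAt u (B t (u t)) (Icc a b) t := by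
  set u : ℝ → V := fun t => if t ≤ m then u₁ t else u₂ t with hu
  have hle : ∀ t ≤ m, u t = u₁ t := fun t ht => if_pos ht
  have hgt : ∀ t, m < t → u t = u₂ t := fun t ht => if_neg (not_le.2 ht)
  have hge : ∀ t, m ≤ t → u t = u₂ t := by
    intro t ht
    rcases eq_or_lt_of_le ht with h | h
    · rw [← h, hle m le_rfl, hm]
    · exact hgt t h
  refine ⟨u, hle, hgt, ?_⟩
  intro t ht
  rcases lt_trichotomy t m with h | h | h
  · have hmem : Icc a m ∈ nhdsWithin t (Icc a b) := by
      apply Filter.mem_of_superset (inter_mem_nhdsWithin _ (Iio_mem_nhds h))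
      rintro y ⟨hy1, hy2⟩
      exact ⟨hy1.1, le_of_lt hy2⟩
    have := ((h1 t ⟨ht.1, le_of_lt h⟩).mono_of_mem_nhdsWithin hmem)
    refine this.congr_of_eventuallyEq ?_ (hle t (le_of_lt h)) |>.congr_deriv ?_
    · filter_upwards [hmem] with y hy using hle y hy.2
    · rw [hle t (le_of_lt h)]
  · subst h
    have e1 : HasDerivWithinAt u (B t (u t)) (Icc a t) t := by
      refine ((h1 t ⟨ht.1, le_rfl⟩).congr (fun y hy => hle y hy.2) (hle t le_rfl)).congr_deriv ?_
      rw [hle t le_rfl]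
    have e2 : HasDerivWithinAt u (B t (u t)) (Icc t b) t := by
      refine ((h2 t ⟨le_rfl, hmb⟩).congr (fun y hy => hge y hy.1) (hge t le_rfl)).congr_deriv ?_
      rw [hge t le_rfl]
    have := e1.union e2
    rwa [Icc_union_Icc_eq_Icc ht.1 hmb] at this
  · have hmem : Icc m b ∈ nhdsWithin t (Icc a b) := by
      apply Filter.mem_of_superset (inter_mem_nhdsWithin _ (Ioi_mem_nhds h))
      rintro y ⟨hy1, hy2⟩
      exact ⟨le_of_lt hy2, hy1.2⟩
    have := ((h2 t ⟨le_of_lt h, ht.2⟩).mono_of_mem_nhdsWithin hmem)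
    refine this.congr_of_eventuallyEq ?_ (hge t (le_of_lt h)) |>.congr_deriv ?_
    · filter_upwards [hmem] with y hy using hge y hy.1
    · rw [hge t (le_of_lt h)]

/-- Forward existence on `[s, b]` by iterating Picard–Lindelöf steps. -/
lemma forward_sol {B : ℝ → V →L[ℝ] V} {a b M : ℝ}
    (hcont : ContinuousOn B (Icc a b)) (hM : ∀ t ∈ Icc a b, ‖B t‖ ≤ M) :
    ∀ n : ℕ, ∀ s ∈ Icc a b, b - s ≤ n * (2 * (M + 1))⁻¹ → ∀ x : V,
    ∃ u : ℝ → V, u s = x ∧ ∀ t ∈ Icc s b, HasDerivWithinAt u (B t (u t)) (Icc s b) t := by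
  intro n
  induction n with
  | zero =>
    intro s hs hlen x
    have hbs : b = s := le_antisymm (by simpa using hlen) hs.2
    refine ⟨fun _ => x, rfl, ?_⟩
    intro t ht
    have : t = s := le_antisymm (hbs ▸ ht.2) ht.1
    subst this
    rw [← hbs, Icc_self]
    exact hasDerivWithinAt_singleton' _ _ _
  | succ n ih =>
    intro s hs hlen x
    have hM0 : 0 ≤ M := le_trans (norm_nonneg _) (hM s hs)
    set ε : ℝ := (2 * (M + 1))⁻¹ with hε
    have hε0 : 0 < ε := by rw [hε]; positivity
    rcases le_or_gt (b - s) (n * ε) with h | h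
    · exact ih s hs h x
    · set m : ℝ := min (s + ε) b with hmdef
      have hsm : s ≤ m := le_min (by linarith) hs.2
      have hmb : m ≤ b := min_le_right _ _
      have hmmem : m ∈ Icc a b := ⟨le_trans hs.1 hsm, hmb⟩
      have hms : m - s ≤ ε := by
        rcases min_le_iff.mp (le_refl m) with _ | _ <;>
        · simp only [hmdef]
          rcases le_or_gt (s + ε) b with hc | hc
          · rw [min_eq_left hc]; linarith
          · rw [min_eq_right (le_of_lt hc)]; linarith
      obtain ⟨u₁, hu₁0, hu₁⟩ := linODE_step hcont hM hs hmmem hsm hms x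
      have hbm : b - m ≤ n * ε := by
        rcases le_or_gt (s + ε) b with hc | hc
        · have : m = s + ε := min_eq_left hc
          rw [this]
          push_cast at hlen
          linarith
        · have : m = b := min_eq_right (le_of_lt hc)
          rw [this]
          have : (0:ℝ) ≤ n * ε := by positivity
          linarith
      obtain ⟨u₂, hu₂0, hu₂⟩ := ih m hmmem hbm (u₁ m)
      obtain ⟨u, hle, _, hu⟩ := glue_sol hsm hmb hu₁ hu₂ hu₂0.symm
      exact ⟨u, by rw [hle s hsm, hu₁0], hu⟩


/-- Existence of a solution on a compact interval with prescribed value at any point. -/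
lemma compact_sol {B : ℝ → V →L[ℝ] V} {a b : ℝ}
    (hcont : ContinuousOn B (Icc a b)) {t₀ : ℝ} (ht₀ : t₀ ∈ Icc a b) (x : V) :
    ∃ u : ℝ → V, u t₀ = x ∧ ∀ t ∈ Icc a b, HasDerivWithinAt u (B t (u t)) (Icc a b) t := by
  obtain ⟨M, hM⟩ := (isCompact_Icc (a := a) (b := b)).exists_bound_of_continuousOn hcont
  have hM0 : 0 ≤ M := le_trans (norm_nonneg _) (hM t₀ ht₀)
  set ε : ℝ := (2 * (M + 1))⁻¹ with hε
  have hε0 : 0 < ε := by rw [hε]; positivity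
  -- forward solution on [t₀, b]
  obtain ⟨uF, huF0, huF⟩ := forward_sol hcont hM ⌈(b - t₀) / ε⌉₊ t₀ ht₀
    (by
      have h1 : (b - t₀) / ε ≤ (⌈(b - t₀) / ε⌉₊ : ℝ) := Nat.le_ceil _
      calc b - t₀ = (b - t₀) / ε * ε := by field_simp
        _ ≤ (⌈(b - t₀) / ε⌉₊ : ℝ) * ε := mul_le_mul_of_nonneg_right h1 (le_of_lt hε0)) x
  -- backward solution on [a, t₀] via reflection
  have hcont' : ContinuousOn (fun t => -(B (-t))) (Icc (-b) (-a)) := by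
    refine ContinuousOn.neg ?_
    refine hcont.comp continuousOn_neg ?_
    intro t ht
    exact ⟨le_neg.mp ht.2, neg_le.mp ht.1⟩
  have hM' : ∀ t ∈ Icc (-b) (-a), ‖-(B (-t))‖ ≤ M := by
    intro t ht
    rw [norm_neg]
    exact hM (-t) ⟨le_neg.mp ht.2, neg_le.mp ht.1⟩
  obtain ⟨w, hw0, hw⟩ := forward_sol hcont' hM' ⌈(-a - (-t₀)) / ε⌉₊ (-t₀)
    (⟨neg_le_neg ht₀.2, neg_le_neg ht₀.1⟩)
    (by
      have h1 : (-a - (-t₀)) / ε ≤ (⌈(-a - (-t₀)) / ε⌉₊ : ℝ) := Nat.le_ceil _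
      calc -a - (-t₀) = (-a - (-t₀)) / ε * ε := by field_simp
        _ ≤ _ := mul_le_mul_of_nonneg_right h1 (le_of_lt hε0)) x
  set uB : ℝ → V := fun t => w (-t) with huBdef
  have huB0 : uB t₀ = x := hw0
  have huB : ∀ t ∈ Icc a t₀, HasDerivWithinAt uB (B t (uB t)) (Icc a t₀) t := by
    intro t ht
    have hmt : -t ∈ Icc (-t₀) (-a) := ⟨neg_le_neg ht.2, neg_le_neg ht.1⟩
    have hmaps : MapsTo (fun τ : ℝ => -τ) (Icc a t₀) (Icc (-t₀) (-a)) := by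
      intro τ hτ; exact ⟨neg_le_neg hτ.2, neg_le_neg hτ.1⟩
    have hneg : HasDerivWithinAt (fun τ : ℝ => -τ) (-1) (Icc a t₀) t :=
      (hasDerivAt_neg t).hasDerivWithinAt
    have := (hw (-t) hmt).scomp (x := t) hneg hmaps
    simpa [huBdef, Function.comp_def] using this
  obtain ⟨u, hle, _, hu⟩ := glue_sol ht₀.1 ht₀.2 huB huF (by rw [huB0, huF0])
  exact ⟨u, by rw [hle t₀ le_rfl, huB0], hu⟩

/-- Uniqueness of solutions on a compact interval (with initial value anywhere inside). -/
lemma compact_unique {B : ℝ → V →L[ℝ] V} {a b : ℝ}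
    (hcont : ContinuousOn B (Icc a b)) {t₀ : ℝ} (ht₀ : t₀ ∈ Icc a b) {u v : ℝ → V}
    (hu : ∀ t ∈ Icc a b, HasDerivWithinAt u (B t (u t)) (Icc a b) t)
    (hv : ∀ t ∈ Icc a b, HasDerivWithinAt v (B t (v t)) (Icc a b) t)
    (h0 : u t₀ = v t₀) : EqOn u v (Icc a b) := by
  obtain ⟨M, hM⟩ := (isCompact_Icc (a := a) (b := b)).exists_bound_of_continuousOn hcont
  set vf : ℝ → V → V := fun t y => if t ∈ Icc a b then B t y else 0 with hvf
  have hlip : ∀ t, LipschitzOnWith M.toNNReal (vf t) univ := by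
    intro t
    refine LipschitzWith.lipschitzOnWith ?_
    by_cases h : t ∈ Icc a b
    · simp only [hvf, if_pos h]
      refine LipschitzWith.weaken (B t).lipschitz ?_
      rw [← norm_toNNReal]
      exact Real.toNNReal_mono (hM t h)
    · simp only [hvf, if_neg h]
      exact (LipschitzWith.const 0).weaken zero_le
  -- derivatives within Ici / Iic
  have hcu : ContinuousOn u (Icc a b) := fun t ht => ((hu t ht).continuousWithinAt)
  have hcv : ContinuousOn v (Icc a b) := fun t ht => ((hv t ht).continuousWithinAt)
  have key_right : EqOn u v (Icc t₀ b) := by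
    rcases le_or_gt t₀ b with htb | htb
    swap
    · intro t ht; exact absurd (le_trans ht.1 ht.2) (not_le.2 htb)
    have hsub : Icc t₀ b ⊆ Icc a b := Icc_subset_Icc ht₀.1 le_rfl
    refine ODE_solution_unique_of_mem_Icc_right (v := vf) (s := fun _ => univ) (fun t _ => hlip t)
      (hcu.mono hsub) ?_ (fun _ _ => mem_univ _) (hcv.mono hsub) ?_ (fun _ _ => mem_univ _) h0
    all_goals
      intro t ht
      have htab : t ∈ Icc a b := ⟨le_trans ht₀.1 ht.1, le_of_lt ht.2⟩
      have hmem : Icc a b ∈ nhdsWithin t (Ici t) := by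
        apply Filter.mem_of_superset (inter_mem_nhdsWithin _ (Iio_mem_nhds ht.2))
        rintro y ⟨hy1, hy2⟩
        exact ⟨le_trans htab.1 hy1, le_of_lt hy2⟩
      simp only [hvf, if_pos htab]
    · exact (hu t htab).mono_of_mem_nhdsWithin hmem
    · exact (hv t htab).mono_of_mem_nhdsWithin hmem
  have key_left : EqOn u v (Icc a t₀) := by
    rcases le_or_gt a t₀ with hat | hat
    swap
    · intro t ht; exact absurd (le_trans ht.1 ht.2) (not_le.2 hat)
    have hsub : Icc a t₀ ⊆ Icc a b := Icc_subset_Icc le_rfl ht₀.2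
    refine ODE_solution_unique_of_mem_Icc_left (v := vf) (s := fun _ => univ) (fun t _ => hlip t)
      (hcu.mono hsub) ?_ (fun _ _ => mem_univ _) (hcv.mono hsub) ?_ (fun _ _ => mem_univ _) h0
    all_goals
      intro t ht
      have htab : t ∈ Icc a b := ⟨le_of_lt ht.1, le_trans ht.2 ht₀.2⟩
      have hmem : Icc a b ∈ nhdsWithin t (Iic t) := by
        apply Filter.mem_of_superset (inter_mem_nhdsWithin _ (Ioi_mem_nhds ht.1))
        rintro y ⟨hy1, hy2⟩
        exact ⟨le_of_lt hy2, le_trans hy1 htab.2⟩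
      simp only [hvf, if_pos htab]
    · exact (hu t htab).mono_of_mem_nhdsWithin hmem
    · exact (hv t htab).mono_of_mem_nhdsWithin hmem
  intro t ht
  rcases le_or_gt t t₀ with h | h
  · exact key_left ⟨ht.1, h⟩
  · exact key_right ⟨le_of_lt h, ht.2⟩

/-- Global existence for a linear ODE on an open order-connected set, with zero extension. -/
lemma global_sol {I : Set ℝ} (hIopen : IsOpen I) (hIconn : I.OrdConnected)
    {B : ℝ → V →L[ℝ] V} (hcont : ContinuousOn B I) {t₀ : ℝ} (ht₀ : t₀ ∈ I) (x : V) :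
    ∃ u : ℝ → V, u t₀ = x ∧ (∀ t ∉ I, u t = 0) ∧
      ∀ t ∈ I, HasDerivAt u (B t (u t)) t := by
  classical
  have hKsub : ∀ t ∈ I, Icc (min t t₀) (max t t₀) ⊆ I := by
    intro t ht
    refine hIconn.out ?_ ?_
    · rcases min_cases t t₀ with ⟨h, _⟩ | ⟨h, _⟩ <;> rw [h] <;> assumption
    · rcases max_cases t t₀ with ⟨h, _⟩ | ⟨h, _⟩ <;> rw [h] <;> assumption
  have ht₀K : ∀ t : ℝ, t₀ ∈ Icc (min t t₀) (max t t₀) :=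
    fun t => ⟨min_le_right _ _, le_max_right _ _⟩
  have htK : ∀ t : ℝ, t ∈ Icc (min t t₀) (max t t₀) :=
    fun t => ⟨min_le_left _ _, le_max_left _ _⟩
  have hsol : ∀ t, t ∈ I → ∃ w : ℝ → V, w t₀ = x ∧ ∀ τ ∈ Icc (min t t₀) (max t t₀),
      HasDerivWithinAt w (B τ (w τ)) (Icc (min t t₀) (max t t₀)) τ := by
    intro t ht
    exact compact_sol (hcont.mono (hKsub t ht)) (ht₀K t) x
  choose! w hw1 hw2 using hsol
  refine ⟨fun t => if t ∈ I then w t t else 0, ?_, fun t ht => if_neg ht, ?_⟩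
  · show (if t₀ ∈ I then w t₀ t₀ else 0) = x
    rw [if_pos ht₀, hw1 t₀ ht₀]
  · intro t ht
    obtain ⟨δ, hδ0, hδ⟩ := Metric.isOpen_iff.mp hIopen t ht
    have ht₁ : t - δ/2 ∈ I := by
      refine hδ ?_
      rw [Metric.mem_ball, Real.dist_eq, abs_of_nonpos (by linarith)]
      linarith
    have ht₂ : t + δ/2 ∈ I := by
      refine hδ ?_
      rw [Metric.mem_ball, Real.dist_eq, abs_of_nonneg (by linarith)]
      linarith
    set J : Set ℝ := Icc (min (t - δ/2) t₀) (max (t + δ/2) t₀) with hJ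
    have hJsub : J ⊆ I := by
      refine hIconn.out ?_ ?_
      · rcases min_cases (t - δ/2) t₀ with ⟨h, _⟩ | ⟨h, _⟩ <;> rw [h] <;> assumption
      · rcases max_cases (t + δ/2) t₀ with ⟨h, _⟩ | ⟨h, _⟩ <;> rw [h] <;> assumption
    have ht₀J : t₀ ∈ J := ⟨min_le_right _ _, le_max_right _ _⟩
    obtain ⟨W, hW1, hW2⟩ := compact_sol (hcont.mono hJsub) ht₀J x
    have hIoosub : Ioo (t - δ/2) (t + δ/2) ⊆ J := fun τ hτ =>
      ⟨le_trans (min_le_left _ _) (le_of_lt hτ.1), le_trans (le_of_lt hτ.2) (le_max_left _ _)⟩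
    have htIoo : t ∈ Ioo (t - δ/2) (t + δ/2) := by constructor <;> linarith
    have heq : ∀ τ ∈ Ioo (t - δ/2) (t + δ/2), (if τ ∈ I then w τ τ else 0) = W τ := by
      intro τ hτ
      have hτI : τ ∈ I := hJsub (hIoosub hτ)
      rw [if_pos hτI]
      have hKJ : Icc (min τ t₀) (max τ t₀) ⊆ J :=
        Icc_subset_Icc (min_le_min (le_of_lt hτ.1) le_rfl) (max_le_max (le_of_lt hτ.2) le_rfl)
      exact compact_unique (hcont.mono (hKsub τ hτI)) (ht₀K τ) (hw2 τ hτI)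
        (fun σ hσ => (hW2 σ (hKJ hσ)).mono hKJ) (by rw [hw1 τ hτI, hW1]) (htK τ)
    have hWat : HasDerivAt W (B t (W t)) t :=
      (hW2 t (hIoosub htIoo)).hasDerivAt
        (Filter.mem_of_superset (Ioo_mem_nhds htIoo.1 htIoo.2) hIoosub)
    have hev : (fun τ => if τ ∈ I then w τ τ else 0) =ᶠ[nhds t] W := by
      filter_upwards [Ioo_mem_nhds htIoo.1 htIoo.2] with τ hτ using heq τ hτ
    have hfinal := hWat.congr_of_eventuallyEq hev
    have hval : (fun t => if t ∈ I then w t t else 0) t = W t := heq t htIoo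
    rw [hval]
    exact hfinal

end ODEAux

section MainAux
open Set
variable {V : Type*} [NormedAddCommGroup V] [NormedSpace ℝ V]

lemma comp_helper (L : V →L[ℝ] V) {v : ℝ → V} {g : ℝ → ℝ} {c t : ℝ} {d : V}
    (hg : HasDerivAt g c t) (hv : HasDerivAt v d (g t)) :
    HasDerivAt (fun τ => L (v (g τ))) (c • L d) t := by
  have h2 : HasDerivAt (v ∘ g) (c • d) t := hv.scomp t hg
  have h3 := L.hasFDerivAt.comp_hasDerivAt t h2
  have h4 : L (c • d) = c • L d := L.map_smul c d
  simpa [Function.comp_def, h4] using h3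

end MainAux

/-- `σ` restricts to a bijection of `𝓛` onto `𝓛` if and only if
`B(qt+p) = q⁻¹·C∘B(t)∘C⁻¹` (written as `B(qt+p)∘C = q⁻¹·(C∘B(t))`) for every `t ∈ I`. -/

theorem stmt_11 {V : Type*} [NormedAddCommGroup V] [NormedSpace ℝ V] [FiniteDimensional ℝ V]
    (g : V →ₗ[ℝ] V →ₗ[ℝ] ℝ) (hg_symm : ∀ v w : V, g v w = g w v)
    (hg_nondeg : ∀ v : V, (∀ w : V, g v w = 0) → v = 0)
    (A : V →L[ℝ] V) (hA : ∀ v w : V, g (A v) w = g v (A w))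
    (I : Set ℝ) (hIopen : IsOpen I) (hIne : I.Nonempty) (hIconn : I.OrdConnected)
    (f : ℝ → ℝ) (hf : ContDiffOn ℝ (⊤ : ℕ∞) f I)
    (q p : ℝ) (hq : 0 < q) (C : V →L[ℝ] V)
    (hCiso : ∀ v w : V, g (C v) (C w) = g v w)
    (hCA : C.comp A = q ^ 2 • A.comp C)
    (hIbij : Set.BijOn (fun t => q * t + p) I I)
    (hfq : ∀ t ∈ I, f t = q ^ 2 * f (q * t + p))
    (B : ℝ → V →L[ℝ] V) (hB : ContDiffOn ℝ (⊤ : ℕ∞) B I)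
    (hRic : ∀ t ∈ I,
      HasDerivAt B (f t • ContinuousLinearMap.id ℝ V + A - (B t).comp (B t)) t) :
    Set.BijOn (sigmaAct q p C) (firstOrderSol I B : Set (ℝ → V)) (firstOrderSol I B)
      ↔ (∀ t ∈ I, (B (q * t + p)).comp C = q⁻¹ • C.comp (B t)) := by
  classical
  haveI : CompleteSpace V := FiniteDimensional.complete ℝ V
  have hqne : q ≠ 0 := ne_of_gt hq
  -- affine maps back and forth
  have hmemφ : ∀ t ∈ I, q * t + p ∈ I := fun t ht => hIbij.mapsTo ht
  have hmemψ : ∀ t ∈ I, q⁻¹ * (t - p) ∈ I := by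
    intro t ht
    obtain ⟨s, hs, hst⟩ := hIbij.surjOn ht
    have : q⁻¹ * (t - p) = s := by
      simp only at hst
      rw [← hst]; field_simp; ring
    rw [this]; exact hs
  have hnotψ : ∀ t ∉ I, q⁻¹ * (t - p) ∉ I := by
    intro t ht hc
    have h1 := hIbij.mapsTo hc
    have he : q * (q⁻¹ * (t - p)) + p = t := by field_simp; ring
    rw [he] at h1; exact ht h1
  have hnotφ : ∀ t ∉ I, q * t + p ∉ I := by
    intro t ht hc
    obtain ⟨s, hs, hst⟩ := hIbij.surjOn hc
    simp only at hst
    have : s = t := by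
      have h2 : q * s = q * t := by linarith
      exact mul_left_cancel₀ hqne h2
    rw [this] at hs; exact ht hs
  have hψφ : ∀ s : ℝ, q⁻¹ * ((q * s + p) - p) = s := by intro s; field_simp; ring
  -- C is bijective
  have hCinj : Function.Injective C := by
    intro v w hvw
    have h0 : C (v - w) = 0 := by rw [map_sub, hvw, sub_self]
    have h1 : v - w = 0 := by
      apply hg_nondeg
      intro z
      have := hCiso (v - w) z
      rw [h0] at this
      simpa using this.symm
    exact sub_eq_zero.mp h1
  have hCsurj : Function.Surjective C :=
    LinearMap.injective_iff_surjective.mp hCinj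
  set e : V ≃L[ℝ] V :=
    (LinearEquiv.ofBijective (C : V →ₗ[ℝ] V) ⟨hCinj, hCsurj⟩).toContinuousLinearEquiv with he
  have hCe : ∀ y, C (e.symm y) = y := fun y => e.apply_symm_apply y
  have heC : ∀ y, e.symm (C y) = y := fun y => e.symm_apply_apply y
  have hinnerψ : ∀ t : ℝ, HasDerivAt (fun τ : ℝ => q⁻¹ * (τ - p)) q⁻¹ t := by
    intro t
    simpa using ((hasDerivAt_id t).sub_const p).const_mul q⁻¹
  have hinnerφ : ∀ t : ℝ, HasDerivAt (fun τ : ℝ => q * τ + p) q t := by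
    intro t
    simpa using ((hasDerivAt_id t).const_mul q).add_const p
  constructor
  · -- `⇒` : invariance implies the operator identity
    intro hbij t ht
    ext x
    obtain ⟨u, hux, hu0, hu1⟩ := global_sol hIopen hIconn hB.continuousOn ht x
    have humem : u ∈ (firstOrderSol I B : Set (ℝ → V)) := ⟨hu0, hu1⟩
    have hσmem := hbij.mapsTo humem
    have hσ1 := hσmem.2 (q * t + p) (hmemφ t ht)
    have hval : sigmaAct q p C u (q * t + p) = C x := by
      show C (u (q⁻¹ * ((q * t + p) - p))) = C x
      rw [hψφ t, hux]
    have hσ2 : HasDerivAt (sigmaAct q p C u) (q⁻¹ • C (B t x)) (q * t + p) := by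
      have hd : HasDerivAt u (B t x) ((fun τ : ℝ => q⁻¹ * (τ - p)) (q * t + p)) := by
        show HasDerivAt u (B t x) (q⁻¹ * ((q * t + p) - p))
        rw [hψφ t]
        rw [← hux]
        exact hu1 t ht
      exact comp_helper C (hinnerψ (q * t + p)) hd
    have huniq := hσ1.unique hσ2
    rw [hval] at huniq
    simpa using huniq
  · -- `⇐` : the operator identity implies invariance
    intro hpt
    have happ : ∀ s ∈ I, ∀ y : V, B (q * s + p) (C y) = q⁻¹ • C (B s y) := by
      intro s hs y
      have := ContinuousLinearMap.ext_iff.mp (hpt s hs) y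
      simpa using this
    have hmaps : Set.MapsTo (sigmaAct q p C) (firstOrderSol I B : Set (ℝ → V))
        (firstOrderSol I B : Set (ℝ → V)) := by
      intro u hu
      obtain ⟨hu0, hu1⟩ := hu
      refine ⟨fun t ht => ?_, fun t ht => ?_⟩
      · show C (u (q⁻¹ * (t - p))) = 0
        rw [hu0 _ (hnotψ t ht), map_zero]
      · have hsI : q⁻¹ * (t - p) ∈ I := hmemψ t ht
        have hd : HasDerivAt u (B (q⁻¹ * (t - p)) (u (q⁻¹ * (t - p))))
            ((fun τ : ℝ => q⁻¹ * (τ - p)) t) := hu1 _ hsI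
        have h2 := comp_helper C (hinnerψ t) hd
        have h3 : B t (sigmaAct q p C u t)
            = q⁻¹ • C (B (q⁻¹ * (t - p)) (u (q⁻¹ * (t - p)))) := by
          show B t (C (u (q⁻¹ * (t - p)))) = _
          have hb := happ _ hsI (u (q⁻¹ * (t - p)))
          have hφψ : q * (q⁻¹ * (t - p)) + p = t := by field_simp; ring
          rw [hφψ] at hb
          exact hb
        rw [h3]
        exact h2
    refine ⟨hmaps, ?_, ?_⟩
    · -- injectivity
      intro u _ v _ huv
      funext s
      have h1 := congrFun huv (q * s + p)
      have h2 : C (u (q⁻¹ * ((q * s + p) - p))) = C (v (q⁻¹ * ((q * s + p) - p))) := h1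
      rw [hψφ s] at h2
      exact hCinj h2
    · -- surjectivity
      intro v hv
      obtain ⟨hv0, hv1⟩ := hv
      set Ci : V →L[ℝ] V := (e.symm : V →L[ℝ] V) with hCidef
      have hCe' : ∀ y, C (Ci y) = y := fun y => e.apply_symm_apply y
      have heC' : ∀ y, Ci (C y) = y := fun y => e.symm_apply_apply y
      set u : ℝ → V := fun t => Ci (v (q * t + p)) with hudef
      have humem : u ∈ (firstOrderSol I B : Set (ℝ → V)) := by
        refine ⟨fun t ht => ?_, fun t ht => ?_⟩
        · show Ci (v (q * t + p)) = 0
          rw [hv0 _ (hnotφ t ht), map_zero]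
        · have hφI : q * t + p ∈ I := hmemφ t ht
          have hd : HasDerivAt v (B (q * t + p) (v (q * t + p)))
              ((fun τ : ℝ => q * τ + p) t) := hv1 _ hφI
          have h2 := comp_helper Ci (hinnerφ t) hd
          have h3 : B t (u t) = q • Ci (B (q * t + p) (v (q * t + p))) := by
            have hb := happ t ht (Ci (v (q * t + p)))
            rw [hCe'] at hb
            have hb2 : q • Ci (B (q * t + p) (v (q * t + p)))
                = q • Ci (q⁻¹ • C (B t (Ci (v (q * t + p))))) := by rw [hb]
            rw [hb2, map_smul, heC', smul_smul, mul_inv_cancel₀ hqne, one_smul]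
          rw [h3]
          exact h2
      refine ⟨u, humem, ?_⟩
      funext t
      show C (u (q⁻¹ * (t - p))) = v t
      have hφψ2 : q * (q⁻¹ * (t - p)) + p = t := by field_simp; ring
      show C (Ci (v (q * (q⁻¹ * (t - p)) + p))) = v t
      rw [hφψ2, hCe']
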